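/- Let V, X, Y₁, S₁, Y₂, S₂ be discrete random variables on a finite probability space such that V → X → (Y₁,S₁) → (Y₂,S₂) forms a Markov chain and V is independent of (S₁,S₂). Then H(V | Y₂, S₂) ≥ H(V | Y₁, S₁), and hence [I(V;Y₁|S₁) − I(V;Y₂|S₂)]⁺ = H(V|Y₂,S₂) − H(V|Y₁,S₁), where [a]⁺ = max{a,0}. -/

import Mathlib

open Finset

/-- Probability that a discrete random variable `X` takes value `x`,
under the probability mass function `μ` on a finite sample space. -/
noncomputable def prob {Ω α : Type*} [Fintype Ω] [DecidableEq α]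
    (μ : Ω → ℝ) (X : Ω → α) (x : α) : ℝ :=
  ∑ ω ∈ Finset.univ.filter (fun ω => X ω = x), μ ω

/-- `μ` is a probability mass function on the finite sample space `Ω`. -/
def IsPMF {Ω : Type*} [Fintype Ω] (μ : Ω → ℝ) : Prop :=
  (∀ ω, 0 ≤ μ ω) ∧ ∑ ω, μ ω = 1

/-- Shannon entropy (natural log) of a discrete random variable. -/
noncomputable def entH {Ω α : Type*} [Fintype Ω] [Fintype α] [DecidableEq α]
    (μ : Ω → ℝ) (X : Ω → α) : ℝ :=
  ∑ x, -(prob μ X x * Real.log (prob μ X x))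

/-- Conditional Shannon entropy `H(X | Y)`. -/
noncomputable def condH {Ω α β : Type*} [Fintype Ω] [Fintype α] [DecidableEq α]
    [Fintype β] [DecidableEq β] (μ : Ω → ℝ) (X : Ω → α) (Y : Ω → β) : ℝ :=
  entH μ (fun ω => (X ω, Y ω)) - entH μ Y

/-- Mutual information `I(X; Y)`. -/
noncomputable def mutInfo {Ω α β : Type*} [Fintype Ω] [Fintype α] [DecidableEq α]
    [Fintype β] [DecidableEq β] (μ : Ω → ℝ) (X : Ω → α) (Y : Ω → β) : ℝ :=
  entH μ X + entH μ Y - entH μ (fun ω => (X ω, Y ω))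

/-- Conditional mutual information `I(X; Y | Z)`. -/
noncomputable def condMutInfo {Ω α β γ : Type*} [Fintype Ω] [Fintype α] [DecidableEq α]
    [Fintype β] [DecidableEq β] [Fintype γ] [DecidableEq γ]
    (μ : Ω → ℝ) (X : Ω → α) (Y : Ω → β) (Z : Ω → γ) : ℝ :=
  condH μ X Z + condH μ Y Z - condH μ (fun ω => (X ω, Y ω)) Z

/-- `X` and `Y` are independent random variables under `μ`. -/
def IndepRV {Ω α β : Type*} [Fintype Ω] [DecidableEq α] [DecidableEq β]
    (μ : Ω → ℝ) (X : Ω → α) (Y : Ω → β) : Prop :=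
  ∀ x y, prob μ (fun ω => (X ω, Y ω)) (x, y) = prob μ X x * prob μ Y y

/-- `A → B → C` forms a Markov chain under `μ`:
`P(A,B,C) P(B) = P(A,B) P(B,C)` pointwise. -/
def MarkovChain {Ω α β γ : Type*} [Fintype Ω] [DecidableEq α] [DecidableEq β] [DecidableEq γ]
    (μ : Ω → ℝ) (A : Ω → α) (B : Ω → β) (C : Ω → γ) : Prop :=
  ∀ a b c, prob μ (fun ω => (A ω, B ω, C ω)) (a, b, c) * prob μ B b
    = prob μ (fun ω => (A ω, B ω)) (a, b) * prob μ (fun ω => (B ω, C ω)) (b, c)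

/-- Binary entropy function (natural log). -/
noncomputable def binEnt (x : ℝ) : ℝ :=
  -(x * Real.log x) - ((1 - x) * Real.log (1 - x))

/-! Forgetting `X` leaves the Markov chain `V → (Y₁,S₁) → (Y₂,S₂)`, so
`I(V; Y₂,S₂ | Y₁,S₁) = 0`, while `I(V; Y₁,S₁ | Y₂,S₂) ≥ 0` by Gibbs' inequality; comparing the two
expansions gives the data-processing inequality `H(V | Y₁,S₁) ≤ H(V | Y₂,S₂)`. Independence of `V`
from `Sᵢ` turns `I(V; Yᵢ | Sᵢ)` into `H(V) - H(V | Yᵢ,Sᵢ)`, so the difference inside `[·]⁺` is the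
nonnegative `H(V | Y₂,S₂) - H(V | Y₁,S₁)`. -/

open Real

section Prob

variable {Ω α β γ δ : Type*} [Fintype Ω] {μ : Ω → ℝ}

lemma prob_nonneg [DecidableEq α] (hμ : ∀ ω, 0 ≤ μ ω) (X : Ω → α) (x : α) :
    0 ≤ prob μ X x :=
  sum_nonneg fun ω _ => hμ ω

lemma sum_prob [Fintype α] [DecidableEq α] (hμ : IsPMF μ) (X : Ω → α) :
    ∑ x, prob μ X x = 1 := by
  rw [← hμ.2]
  exact sum_fiberwise univ X μ

lemma prob_congr [DecidableEq α] [DecidableEq β] {X : Ω → α} {Y : Ω → β} {x : α} {y : β}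
    (h : ∀ ω, X ω = x ↔ Y ω = y) : prob μ X x = prob μ Y y := by
  simp only [prob, h]

lemma sum_prob_pair_left [Fintype α] [DecidableEq α] [DecidableEq β] (μ : Ω → ℝ)
    (X : Ω → α) (Y : Ω → β) (y : β) :
    ∑ x, prob μ (fun ω => (X ω, Y ω)) (x, y) = prob μ Y y := by
  unfold prob
  rw [← sum_fiberwise (univ.filter fun ω => Y ω = y) X μ]
  refine sum_congr rfl fun x _ => ?_
  congr 1
  ext ω
  simp [and_comm]

lemma prob_comp [Fintype α] [DecidableEq α] [DecidableEq β] (μ : Ω → ℝ) (X : Ω → α)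
    (f : α → β) (b : β) :
    prob μ (fun ω => f (X ω)) b = ∑ x with f x = b, prob μ X x := by
  unfold prob
  rw [sum_fiberwise_eq_sum_filter univ _ X μ]
  congr 1
  ext ω
  simp

lemma prob_le_prob_comp [Fintype α] [DecidableEq α] [DecidableEq β] (hμ : ∀ ω, 0 ≤ μ ω)
    (X : Ω → α) (f : α → β) (x : α) :
    prob μ X x ≤ prob μ (fun ω => f (X ω)) (f x) := by
  rw [prob_comp μ X f]
  exact single_le_sum (fun x _ => prob_nonneg hμ X x) (by simp)

lemma sum_prob_comp_mul [Fintype α] [DecidableEq α] [Fintype β] [DecidableEq β]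
    (μ : Ω → ℝ) (X : Ω → α) (f : α → β) (F : β → ℝ) :
    ∑ b, prob μ (fun ω => f (X ω)) b * F b = ∑ x, prob μ X x * F (f x) := by
  simp_rw [prob_comp, sum_mul]
  rw [← sum_fiberwise univ f (fun x => prob μ X x * F (f x))]
  refine sum_congr rfl fun b _ => sum_congr rfl fun x hx => ?_
  rw [(mem_filter.mp hx).2]

lemma prob_prodMap [Fintype α] [DecidableEq α] [Fintype β] [DecidableEq β] [DecidableEq γ]
    [DecidableEq δ] (μ : Ω → ℝ) (X : Ω → α) (Y : Ω → β) (f : α → γ) (g : β → δ)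
    (c : γ) (d : δ) :
    prob μ (fun ω => (f (X ω), g (Y ω))) (c, d)
      = ∑ x with f x = c, ∑ y with g y = d, prob μ (fun ω => (X ω, Y ω)) (x, y) := by
  refine (prob_comp μ (fun ω => (X ω, Y ω)) (Prod.map f g) (c, d)).trans ?_
  rw [← sum_product']
  congr 1
  ext
  simp [Prod.ext_iff]

end Prob

section Entropy

variable {Ω α β : Type*} [Fintype Ω] [Fintype α] [DecidableEq α] [Fintype β] [DecidableEq β]
  {μ : Ω → ℝ}

lemma entH_comp_eq_sum (μ : Ω → ℝ) (X : Ω → α) (f : α → β) :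
    entH μ (fun ω => f (X ω))
      = ∑ x, prob μ X x * -log (prob μ (fun ω => f (X ω)) (f x)) := by
  simp only [entH, ← mul_neg]
  exact sum_prob_comp_mul μ X f _

lemma entH_comp_of_injective (μ : Ω → ℝ) (X : Ω → α) {f : α → β} (hf : f.Injective) :
    entH μ (fun ω => f (X ω)) = entH μ X := by
  rw [entH_comp_eq_sum, entH]
  refine sum_congr rfl fun x _ => ?_
  rw [prob_congr (X := fun ω => f (X ω)) fun ω => hf.eq_iff, mul_neg]

lemma entH_pair_comm (μ : Ω → ℝ) (X : Ω → α) (Y : Ω → β) :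
    entH μ (fun ω => (X ω, Y ω)) = entH μ (fun ω => (Y ω, X ω)) :=
  entH_comp_of_injective μ (fun ω => (Y ω, X ω)) (f := Prod.swap) Prod.swap_injective

lemma entH_pair_of_indepRV (hμ : IsPMF μ) {X : Ω → α} {Y : Ω → β} (h : IndepRV μ X Y) :
    entH μ (fun ω => (X ω, Y ω)) = entH μ X + entH μ Y := by
  have key : ∀ x y, -(prob μ (fun ω => (X ω, Y ω)) (x, y)
        * log (prob μ (fun ω => (X ω, Y ω)) (x, y)))
      = prob μ Y y * -(prob μ X x * log (prob μ X x))
        + prob μ X x * -(prob μ Y y * log (prob μ Y y)) := by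
    intro x y
    simpa only [h x y, negMulLog, neg_mul] using negMulLog_mul (prob μ X x) (prob μ Y y)
  simp only [entH, Fintype.sum_prod_type, key, sum_add_distrib, ← mul_sum, ← sum_mul,
    sum_prob hμ, one_mul]

end Entropy

section Markov

variable {Ω α β γ δ : Type*} [Fintype Ω] [Fintype α] [DecidableEq α] [Fintype β]
  [DecidableEq β] [Fintype γ] [DecidableEq γ] [DecidableEq δ] {μ : Ω → ℝ}

lemma MarkovChain.comp_left {A : Ω → α} {B : Ω → β} {C : Ω → γ} (h : MarkovChain μ A B C)
    (f : α → δ) : MarkovChain μ (fun ω => f (A ω)) B C := by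
  intro a b c
  have h₃ := prob_prodMap μ A (fun ω => (B ω, C ω)) f id a (b, c)
  have h₂ := prob_prodMap μ A B f id a b
  simp only [id, filter_eq', mem_univ, ite_true, sum_singleton] at h₂ h₃
  rw [h₃, h₂, sum_mul, sum_mul]
  exact sum_congr rfl fun x _ => h x b c

lemma IndepRV.comp_right {X : Ω → α} {Y : Ω → β} (h : IndepRV μ X Y) (g : β → δ) :
    IndepRV μ X (fun ω => g (Y ω)) := by
  intro x d
  have h₂ := prob_prodMap μ X Y id g x d
  simp only [id, filter_eq', mem_univ, ite_true, sum_singleton] at h₂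
  rw [h₂, prob_comp μ Y g, mul_sum]
  exact sum_congr rfl fun y _ => h x y

end Markov

lemma sub_le_mul_log_div {p q : ℝ} (hp : 0 ≤ p) (hq : 0 < q) : p - q ≤ p * log (p / q) := by
  have key : q * InformationTheory.klFun (p / q) = p * log (p / q) + q - p := by
    rw [InformationTheory.klFun_apply]
    field_simp
  linarith [mul_nonneg hq.le (InformationTheory.klFun_nonneg (div_nonneg hp hq.le))]

lemma sum_mul_log_div_nonneg {ι : Type*} [Fintype ι] {p q : ι → ℝ} (hp : ∀ i, 0 ≤ p i)
    (hq : ∀ i, 0 ≤ q i) (hpq : ∀ i, q i = 0 → p i = 0) (hsum : ∑ i, q i ≤ ∑ i, p i) :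
    0 ≤ ∑ i, p i * log (p i / q i) := by
  have term : ∀ i, p i - q i ≤ p i * log (p i / q i) := fun i => by
    rcases (hq i).eq_or_lt with h | h
    · simp [hpq i h.symm, ← h]
    · exact sub_le_mul_log_div (hp i) h
  have := sum_le_sum fun i (_ : i ∈ univ) => term i
  rw [sum_sub_distrib] at this
  linarith

section CondMutInfo

variable {Ω α β γ : Type*} [Fintype Ω] [Fintype α] [DecidableEq α] [Fintype β] [DecidableEq β]
  [Fintype γ] [DecidableEq γ] {μ : Ω → ℝ}

lemma condMutInfo_eq_sum (hμ : ∀ ω, 0 ≤ μ ω) (A : Ω → α) (B : Ω → β) (C : Ω → γ) :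
    condMutInfo μ A B C = ∑ i : (α × β) × γ, prob μ (fun ω => ((A ω, B ω), C ω)) i
      * log (prob μ (fun ω => ((A ω, B ω), C ω)) i * prob μ C i.2
        / (prob μ (fun ω => (A ω, C ω)) (i.1.1, i.2)
          * prob μ (fun ω => (B ω, C ω)) (i.1.2, i.2))) := by
  set T := fun ω => ((A ω, B ω), C ω)
  have hAC : entH μ (fun ω => (A ω, C ω))
      = ∑ i, prob μ T i * -log (prob μ (fun ω => (A ω, C ω)) (i.1.1, i.2)) :=
    entH_comp_eq_sum μ T fun i => (i.1.1, i.2)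
  have hBC : entH μ (fun ω => (B ω, C ω))
      = ∑ i, prob μ T i * -log (prob μ (fun ω => (B ω, C ω)) (i.1.2, i.2)) :=
    entH_comp_eq_sum μ T fun i => (i.1.2, i.2)
  have hC : entH μ C = ∑ i, prob μ T i * -log (prob μ C i.2) :=
    entH_comp_eq_sum μ T fun i => i.2
  have hT : entH μ T = ∑ i, prob μ T i * -log (prob μ T i) := by simp only [entH, mul_neg]
  rw [condMutInfo, condH, condH, condH, hAC, hBC, hC, hT]
  simp only [← sum_sub_distrib, ← sum_add_distrib]
  refine sum_congr rfl fun i _ => ?_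
  rcases (prob_nonneg hμ T i).eq_or_lt with h | h
  · simp [← h]
  have hAC := h.trans_le (prob_le_prob_comp hμ T (fun i => (i.1.1, i.2)) i)
  have hBC := h.trans_le (prob_le_prob_comp hμ T (fun i => (i.1.2, i.2)) i)
  have hC := h.trans_le (prob_le_prob_comp hμ T (fun i => i.2) i)
  rw [log_div (by positivity) (by positivity), log_mul h.ne' hC.ne', log_mul hAC.ne' hBC.ne']
  ring

lemma condMutInfo_nonneg (hμ : IsPMF μ) (A : Ω → α) (B : Ω → β) (C : Ω → γ) :
    0 ≤ condMutInfo μ A B C := by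
  set T := fun ω => ((A ω, B ω), C ω)
  -- the law that would make `A → C → B` Markov; its total mass is at most one
  set q : (α × β) × γ → ℝ := fun i =>
    prob μ (fun ω => (A ω, C ω)) (i.1.1, i.2) * prob μ (fun ω => (B ω, C ω)) (i.1.2, i.2)
      / prob μ C i.2
  have hq : ∀ i, 0 ≤ q i := fun i =>
    div_nonneg (mul_nonneg (prob_nonneg hμ.1 _ _) (prob_nonneg hμ.1 _ _)) (prob_nonneg hμ.1 _ _)
  have hpq : ∀ i, q i = 0 → prob μ T i = 0 := by
    intro i hi
    refine le_antisymm ?_ (prob_nonneg hμ.1 T i)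
    rcases div_eq_zero_iff.mp hi with hi | hi
    · rcases mul_eq_zero.mp hi with hi | hi
      · exact hi ▸ prob_le_prob_comp hμ.1 T (fun i => (i.1.1, i.2)) i
      · exact hi ▸ prob_le_prob_comp hμ.1 T (fun i => (i.1.2, i.2)) i
    · exact hi ▸ prob_le_prob_comp hμ.1 T (fun i => i.2) i
  have hsum : ∑ i, q i ≤ ∑ i, prob μ T i := by
    rw [sum_prob hμ, ← sum_prob hμ (fun ω => (A ω, C ω))]
    calc ∑ i, q i
        = ∑ x : α × γ, prob μ (fun ω => (A ω, C ω)) x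
            * ((∑ b, prob μ (fun ω => (B ω, C ω)) (b, x.2)) / prob μ C x.2) := by
          simp only [Fintype.sum_prod_type, q, sum_div, mul_sum]
          refine sum_congr rfl fun a _ => sum_comm.trans (sum_congr rfl fun c _ => ?_)
          exact sum_congr rfl fun b _ => mul_div_assoc _ _ _
      _ = ∑ x : α × γ, prob μ (fun ω => (A ω, C ω)) x * (prob μ C x.2 / prob μ C x.2) := by
          simp only [sum_prob_pair_left]
      _ ≤ ∑ x : α × γ, prob μ (fun ω => (A ω, C ω)) x :=
          sum_le_sum fun x _ => mul_le_of_le_one_right (prob_nonneg hμ.1 _ x) (div_self_le_one _)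
  rw [condMutInfo_eq_sum hμ.1]
  refine (sum_mul_log_div_nonneg (prob_nonneg hμ.1 T) hq hpq hsum).trans_eq ?_
  exact sum_congr rfl fun i _ => by rw [div_div_eq_mul_div]

lemma MarkovChain.condMutInfo_eq_zero (hμ : ∀ ω, 0 ≤ μ ω) {A : Ω → α} {B : Ω → β}
    {C : Ω → γ} (h : MarkovChain μ A B C) : condMutInfo μ A C B = 0 := by
  rw [condMutInfo_eq_sum hμ]
  refine sum_eq_zero fun ⟨⟨a, c⟩, b⟩ _ => ?_
  have hT : prob μ (fun ω => ((A ω, C ω), B ω)) ((a, c), b)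
      = prob μ (fun ω => (A ω, B ω, C ω)) (a, b, c) :=
    prob_congr fun ω => by simp only [Prod.mk.injEq]; tauto
  have hCB : prob μ (fun ω => (C ω, B ω)) (c, b) = prob μ (fun ω => (B ω, C ω)) (b, c) :=
    prob_congr fun ω => by simp only [Prod.mk.injEq]; tauto
  dsimp only
  rw [hT, hCB, h a b c]
  rcases eq_or_ne (prob μ (fun ω => (A ω, B ω)) (a, b) * prob μ (fun ω => (B ω, C ω)) (b, c)) 0
    with h0 | h0 <;> simp [h0]

lemma MarkovChain.condH_le (hμ : IsPMF μ) {A : Ω → α} {B : Ω → β} {C : Ω → γ}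
    (h : MarkovChain μ A B C) : condH μ A B ≤ condH μ A C := by
  have h₁ := condMutInfo_nonneg hμ A B C
  have h₂ := h.condMutInfo_eq_zero hμ.1
  have e₁ := entH_pair_comm μ B C
  have e₂ : entH μ (fun ω => ((A ω, B ω), C ω)) = entH μ (fun ω => ((A ω, C ω), B ω)) :=
    entH_comp_of_injective μ (fun ω => ((A ω, C ω), B ω)) (f := fun i => ((i.1.1, i.2), i.1.2))
      (by rintro ⟨⟨_, _⟩, _⟩ ⟨⟨_, _⟩, _⟩ hi; simp_all)
  simp only [condMutInfo, condH] at h₁ h₂ ⊢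
  linarith

lemma IndepRV.condMutInfo_eq (hμ : IsPMF μ) {A : Ω → α} {C : Ω → γ} (h : IndepRV μ A C)
    (B : Ω → β) : condMutInfo μ A B C = entH μ A - condH μ A (fun ω => (B ω, C ω)) := by
  have e₁ := entH_pair_of_indepRV hμ h
  have e₂ : entH μ (fun ω => ((A ω, B ω), C ω)) = entH μ (fun ω => (A ω, B ω, C ω)) :=
    entH_comp_of_injective μ (fun ω => (A ω, B ω, C ω)) (f := (Equiv.prodAssoc α β γ).symm)
      (Equiv.injective _)
  simp only [condMutInfo, condH, e₁, e₂]
  ring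

end CondMutInfo

theorem physically_degraded_entropy_ineq_general
    {Ω 𝓥 𝓧 𝓨₁ 𝓢₁ 𝓨₂ 𝓢₂ : Type*} [Fintype Ω]
    [Fintype 𝓥] [DecidableEq 𝓥] [Fintype 𝓧] [DecidableEq 𝓧]
    [Fintype 𝓨₁] [DecidableEq 𝓨₁] [Fintype 𝓢₁] [DecidableEq 𝓢₁]
    [Fintype 𝓨₂] [DecidableEq 𝓨₂] [Fintype 𝓢₂] [DecidableEq 𝓢₂]
    (μ : Ω → ℝ) (hμ : IsPMF μ)
    (V : Ω → 𝓥) (X : Ω → 𝓧) (Y₁ : Ω → 𝓨₁) (S₁ : Ω → 𝓢₁) (Y₂ : Ω → 𝓨₂) (S₂ : Ω → 𝓢₂)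
    (hMarkov2 : MarkovChain μ (fun ω => (V ω, X ω)) (fun ω => (Y₁ ω, S₁ ω))
      (fun ω => (Y₂ ω, S₂ ω)))
    (hInd : IndepRV μ V (fun ω => (S₁ ω, S₂ ω))) :
    condH μ V (fun ω => (Y₂ ω, S₂ ω)) ≥ condH μ V (fun ω => (Y₁ ω, S₁ ω)) ∧
    max (condMutInfo μ V Y₁ S₁ - condMutInfo μ V Y₂ S₂) 0
      = condH μ V (fun ω => (Y₂ ω, S₂ ω)) - condH μ V (fun ω => (Y₁ ω, S₁ ω)) := by
  have hMarkov : MarkovChain μ V (fun ω => (Y₁ ω, S₁ ω)) (fun ω => (Y₂ ω, S₂ ω)) :=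
    hMarkov2.comp_left Prod.fst
  have hInd₁ : IndepRV μ V S₁ := hInd.comp_right Prod.fst
  have hInd₂ : IndepRV μ V S₂ := hInd.comp_right Prod.snd
  have hle := hMarkov.condH_le hμ
  refine ⟨hle, ?_⟩
  rw [hInd₁.condMutInfo_eq hμ, hInd₂.condMutInfo_eq hμ, max_eq_left (by linarith)]
  ring

/-- For a physically-degraded chain `V → X → (Y₁,S₁) → (Y₂,S₂)`
with `V` independent of `(S₁,S₂)`, we have `H(V|Y₂,S₂) ≥ H(V|Y₁,S₁)` and
`[I(V;Y₁|S₁) − I(V;Y₂|S₂)]⁺ = H(V|Y₂,S₂) − H(V|Y₁,S₁)`. -/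
theorem physically_degraded_entropy_ineq
    {Ω 𝓥 𝓧 𝓨₁ 𝓢₁ 𝓨₂ 𝓢₂ : Type*} [Fintype Ω]
    [Fintype 𝓥] [DecidableEq 𝓥] [Fintype 𝓧] [DecidableEq 𝓧]
    [Fintype 𝓨₁] [DecidableEq 𝓨₁] [Fintype 𝓢₁] [DecidableEq 𝓢₁]
    [Fintype 𝓨₂] [DecidableEq 𝓨₂] [Fintype 𝓢₂] [DecidableEq 𝓢₂]
    (μ : Ω → ℝ) (hμ : IsPMF μ)
    (V : Ω → 𝓥) (X : Ω → 𝓧) (Y₁ : Ω → 𝓨₁) (S₁ : Ω → 𝓢₁) (Y₂ : Ω → 𝓨₂) (S₂ : Ω → 𝓢₂)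
    (hMarkov1 : MarkovChain μ V X (fun ω => (Y₁ ω, S₁ ω)))
    (hMarkov2 : MarkovChain μ (fun ω => (V ω, X ω)) (fun ω => (Y₁ ω, S₁ ω))
      (fun ω => (Y₂ ω, S₂ ω)))
    (hInd : IndepRV μ V (fun ω => (S₁ ω, S₂ ω))) :
    condH μ V (fun ω => (Y₂ ω, S₂ ω)) ≥ condH μ V (fun ω => (Y₁ ω, S₁ ω)) ∧
    max (condMutInfo μ V Y₁ S₁ - condMutInfo μ V Y₂ S₂) 0
      = condH μ V (fun ω => (Y₂ ω, S₂ ω)) - condH μ V (fun ω => (Y₁ ω, S₁ ω)) :=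
  physically_degraded_entropy_ineq_general μ hμ V X Y₁ S₁ Y₂ S₂ hMarkov2 hInd
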